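/- Let R be a commutative reduced ring whose zero ideal is the intersection of k prime ideals P1, ..., Pk. Then the annihilating-ideal graph AG(R) is k-colorable: there is a coloring of the nonzero annihilating-ideals with k colors such that adjacent ideals (i.e., with product zero) receive different colors. -/

import Mathlib

/-- The annihilating-ideal graph of a commutative ring `R`. -/
def annihilatingIdealGraph (R : Type*) [CommRing R] :
    SimpleGraph {I : Ideal R // I ≠ ⊥ ∧ Submodule.annihilator I ≠ ⊥} where
  Adj I J := I ≠ J ∧ (I : Ideal R) * (J : Ideal R) = ⊥
  symm := ⟨fun I J h => ⟨h.1.symm, by rw [mul_comm]; exact h.2⟩⟩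
  loopless := ⟨fun I h => h.1 rfl⟩

/-! Colour a vertex `I` by some `i` with `I ⊄ Pᵢ`, which exists since `⋂ Pᵢ = 0` and `I ≠ 0`.
If `IJ = 0` and both got colour `i`, then `IJ ⊆ Pᵢ` with `Pᵢ` prime forces `I ⊆ Pᵢ` or `J ⊆ Pᵢ`. -/

theorem exists_not_le_of_iInf_eq_bot {α ι : Type*} [CompleteLattice α] {f : ι → α}
    (hf : ⨅ i, f i = ⊥) {a : α} (ha : a ≠ ⊥) : ∃ i, ¬ a ≤ f i := by
  by_contra! h
  exact ha (le_bot_iff.mp (hf ▸ le_iInf h))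

theorem Ideal.IsPrime.le_or_le_of_mul_eq_bot {R : Type*} [CommSemiring R] {P I J : Ideal R}
    (hP : P.IsPrime) (h : I * J = ⊥) : I ≤ P ∨ J ≤ P :=
  hP.mul_le.mp (h ▸ bot_le)

theorem AG_colorable_of_zero_eq_inter_primes_general {R : Type*} [CommRing R]
    (k : ℕ) (P : Fin k → Ideal R) (hP : ∀ i, (P i).IsPrime) (hinf : (⨅ i, P i) = ⊥) :
    (annihilatingIdealGraph R).Colorable k := by
  choose c hc using fun I : {I : Ideal R // I ≠ ⊥ ∧ Submodule.annihilator I ≠ ⊥} =>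
    exists_not_le_of_iInf_eq_bot hinf I.2.1
  refine ⟨SimpleGraph.Coloring.mk c fun {I J} hIJ hc_eq => ?_⟩
  rcases (hP (c J)).le_or_le_of_mul_eq_bot hIJ.2 with hI | hJ
  · exact hc I (hc_eq ▸ hI)
  · exact hc J hJ

/-- If the zero ideal of a reduced ring `R` is an intersection of `k` primes, then
`AG(R)` is `k`-colorable. -/
theorem AG_colorable_of_zero_eq_inter_primes {R : Type*} [CommRing R] [IsReduced R]
    (k : ℕ) (P : Fin k → Ideal R) (hP : ∀ i, (P i).IsPrime) (hinf : (⨅ i, P i) = ⊥) :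
    (annihilatingIdealGraph R).Colorable k :=
  AG_colorable_of_zero_eq_inter_primes_general k P hP hinf
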